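/- arXiv:2109.05264 — 5 statements merged into one kernel-verified Lean document; each statement's English description precedes it below -/
import Mathlib

section
/- Let A be a residuated binar whose underlying lattice is distributive. If A satisfies the identities (x ∨ y)/z = (x/z) ∨ (y/z) and (x ∧ y)\z = (x\z) ∨ (y\z), then A satisfies the identity x\(y ∨ z) = (x\y) ∨ (x\z). -/
/-!
Put `u = x \ (y ⊔ z)`, `c = y / u` and `d = z / u`. Residuation gives `c·u ≤ y` and `d·u ≤ z`,
and the identity for `/` turns `x ≤ (y ⊔ z) / u` into `x ≤ c ⊔ d`. Since `(c ⊓ d)·u ≤ y ⊓ z`,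
the identity for `\` yields `u ≤ d \ y ⊔ c \ z`; together with `u ≤ c \ y` and `u ≤ d \ z`,
distributivity gives `u ≤ (c \ y ⊓ d \ y) ⊔ (c \ z ⊓ d \ z)`. Finally `c \ w ⊓ d \ w ≤ (c ⊔ d) \ w ≤ x \ w`.
-/

section

variable {A : Type*} [Lattice A]

theorem le_sup_inf_of_le_sup {u a a' b b' : A}
    (hdist : ∀ x y z : A, x ⊓ (y ⊔ z) = (x ⊓ y) ⊔ (x ⊓ z))
    (ha : u ≤ a) (hb' : u ≤ b') (h : u ≤ a' ⊔ b) : u ≤ (a ⊓ a') ⊔ (b ⊓ b') :=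
  calc u = (u ⊓ a') ⊔ (u ⊓ b) := by rw [← hdist, inf_eq_left.mpr h]
    _ ≤ (a ⊓ a') ⊔ (b ⊓ b') :=
      sup_le_sup (inf_le_inf_right a' ha) (le_inf inf_le_right (inf_le_left.trans hb'))

/-- `under x z` is `x \ z` and `over' z y` is `z / y`. -/
def IsResiduated (mul under over' : A → A → A) : Prop :=
  ∀ x y z : A, (mul x y ≤ z ↔ y ≤ under x z) ∧ (mul x y ≤ z ↔ x ≤ over' z y)

namespace IsResiduated

variable {mul under over' : A → A → A}

theorem le_under_iff (h : IsResiduated mul under over') {x y z : A} :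
    y ≤ under x z ↔ mul x y ≤ z :=
  (h x y z).1.symm

theorem le_over_iff (h : IsResiduated mul under over') {x y z : A} :
    x ≤ over' z y ↔ mul x y ≤ z :=
  (h x y z).2.symm

theorem mul_under_le (h : IsResiduated mul under over') (x z : A) : mul x (under x z) ≤ z :=
  h.le_under_iff.mp le_rfl

theorem mul_over_le (h : IsResiduated mul under over') (y z : A) : mul (over' z y) y ≤ z :=
  h.le_over_iff.mp le_rfl

theorem mul_le_mul_right (h : IsResiduated mul under over') {a b : A} (w : A) (hab : a ≤ b) :
    mul a w ≤ mul b w :=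
  h.le_over_iff.mp (hab.trans (h.le_over_iff.mpr le_rfl))

theorem mul_le_mul_left (h : IsResiduated mul under over') (a : A) {w w' : A} (hw : w ≤ w') :
    mul a w ≤ mul a w' :=
  h.le_under_iff.mp (hw.trans (h.le_under_iff.mpr le_rfl))

theorem under_mono_right (h : IsResiduated mul under over') (a : A) {b b' : A} (hb : b ≤ b') :
    under a b ≤ under a b' :=
  h.le_under_iff.mpr ((h.mul_under_le a b).trans hb)

theorem under_anti_left (h : IsResiduated mul under over') {a b : A} (w : A) (hab : a ≤ b) :
    under b w ≤ under a w :=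
  h.le_under_iff.mpr ((h.mul_le_mul_right _ hab).trans (h.mul_under_le b w))

theorem inf_under_le_under_sup (h : IsResiduated mul under over') (c d w : A) :
    under c w ⊓ under d w ≤ under (c ⊔ d) w := by
  refine h.le_under_iff.mpr (h.le_over_iff.mp (sup_le ?_ ?_))
  · exact h.le_over_iff.mpr ((h.mul_le_mul_left c inf_le_left).trans (h.mul_under_le c w))
  · exact h.le_over_iff.mpr ((h.mul_le_mul_left d inf_le_right).trans (h.mul_under_le d w))

theorem under_sup_le_sup_under (h : IsResiduated mul under over')
    (hdist : ∀ x y z : A, x ⊓ (y ⊔ z) = (x ⊓ y) ⊔ (x ⊓ z))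
    (hover : ∀ x y z : A, over' (x ⊔ y) z = over' x z ⊔ over' y z)
    (hunder : ∀ x y z : A, under (x ⊓ y) z = under x z ⊔ under y z) (x y z : A) :
    under x (y ⊔ z) ≤ under x y ⊔ under x z := by
  set u := under x (y ⊔ z)
  set c := over' y u
  set d := over' z u
  have hx : x ≤ c ⊔ d := by
    rw [← hover]
    exact h.le_over_iff.mpr (h.mul_under_le x (y ⊔ z))
  have hcu : mul c u ≤ y := h.mul_over_le u y
  have hdu : mul d u ≤ z := h.mul_over_le u z
  have hcross : u ≤ under d y ⊔ under c z := by
    have hcdu : u ≤ under (c ⊓ d) (y ⊓ z) := h.le_under_iff.mpr <|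
      le_inf ((h.mul_le_mul_right u inf_le_left).trans hcu)
        ((h.mul_le_mul_right u inf_le_right).trans hdu)
    rw [hunder] at hcdu
    exact hcdu.trans ((sup_le_sup (h.under_mono_right c inf_le_right)
      (h.under_mono_right d inf_le_left)).trans_eq (sup_comm _ _))
  calc u ≤ (under c y ⊓ under d y) ⊔ (under c z ⊓ under d z) :=
        le_sup_inf_of_le_sup hdist (h.le_under_iff.mpr hcu) (h.le_under_iff.mpr hdu) hcross
    _ ≤ under (c ⊔ d) y ⊔ under (c ⊔ d) z :=
        sup_le_sup (h.inf_under_le_under_sup c d y) (h.inf_under_le_under_sup c d z)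
    _ ≤ under x y ⊔ under x z := sup_le_sup (h.under_anti_left y hx) (h.under_anti_left z hx)

theorem under_sup_le (h : IsResiduated mul under over') (x y z : A) :
    under x y ⊔ under x z ≤ under x (y ⊔ z) :=
  sup_le (h.under_mono_right x le_sup_left) (h.under_mono_right x le_sup_right)

end IsResiduated

end

/-- In a residuated binar with distributive lattice reduct,
identities (4) and (5) imply identity (3). -/
theorem stmt_0 {A : Type*} [Lattice A]
    (mul under over' : A → A → A)
    (hres : ∀ x y z : A, (mul x y ≤ z ↔ y ≤ under x z) ∧ (mul x y ≤ z ↔ x ≤ over' z y))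
    (hdist : ∀ x y z : A, x ⊓ (y ⊔ z) = (x ⊓ y) ⊔ (x ⊓ z))
    (h1 : ∀ x y z : A, over' (x ⊔ y) z = over' x z ⊔ over' y z)
    (h2 : ∀ x y z : A, under (x ⊓ y) z = under x z ⊔ under y z) :
    ∀ x y z : A, under x (y ⊔ z) = under x y ⊔ under x z := by
  have h : IsResiduated mul under over' := hres
  intro x y z
  exact le_antisymm (h.under_sup_le_sup_under hdist h1 h2 x y z) (h.under_sup_le x y z)
end

section
/- Let A be a residuated binar whose underlying lattice is distributive. If A satisfies the identities (x ∧ y)\z = (x\z) ∨ (y\z) and x·(y ∧ z) = (x·y) ∧ (x·z), then A satisfies the identity (x ∧ y)·z = (x·z) ∧ (y·z). -/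
/-!
Put `w = (x ∧ y)·z`, `a = x\w` and `b = y\w`. The identity `(x ∧ y)\w = a ∨ b` gives
`z ≤ a ∨ b`, so by distributivity `z = (z ∧ a) ∨ (z ∧ b)`. As `·` preserves joins in each
argument, `x·z ≤ w ∨ x·(z ∧ b)` and `y·z ≤ w ∨ y·(z ∧ a)`. The cross term
`x·(z ∧ b) ∧ y·(z ∧ a)` lies below `(x ∨ y)·b ∧ (x ∨ y)·a = (x ∨ y)·(a ∧ b)`, hence below
`x·a ∨ y·b ≤ w`, and distributivity yields `x·z ∧ y·z ≤ w`.
-/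

section ResiduatedBinar

variable {A : Type*} {mul under over' : A → A → A}

theorem mul_le_sup_mul_inf [DistribLattice A] {x z a b w : A}
    (hx : GaloisConnection (mul x) (under x)) (hz : z ≤ a ⊔ b) (hxa : mul x a ≤ w) :
    mul x z ≤ w ⊔ mul x (z ⊓ b) :=
  calc mul x z = mul x (z ⊓ a) ⊔ mul x (z ⊓ b) := by
        rw [← hx.l_sup, ← inf_sup_left, inf_eq_left.mpr hz]
    _ ≤ w ⊔ mul x (z ⊓ b) := sup_le_sup_right ((hx.monotone_l inf_le_right).trans hxa) _

theorem mul_inf_mul_le_sup_mul_inf [Lattice A]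
    (hr : ∀ y, GaloisConnection (fun x => mul x y) (fun z => over' z y))
    (h2 : ∀ x y z : A, mul x (y ⊓ z) = mul x y ⊓ mul x z) (x y a b : A) :
    mul x a ⊓ mul y b ≤ mul x (a ⊓ b) ⊔ mul y (a ⊓ b) :=
  calc mul x a ⊓ mul y b ≤ mul (x ⊔ y) a ⊓ mul (x ⊔ y) b :=
        inf_le_inf ((hr a).monotone_l le_sup_left) ((hr b).monotone_l le_sup_right)
    _ = mul (x ⊔ y) (a ⊓ b) := (h2 _ _ _).symm
    _ = mul x (a ⊓ b) ⊔ mul y (a ⊓ b) := (hr _).l_sup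

theorem mul_inf_mul_le_inf_mul [DistribLattice A] (hl : ∀ x, GaloisConnection (mul x) (under x))
    (hr : ∀ y, GaloisConnection (fun x => mul x y) (fun z => over' z y))
    (h1 : ∀ x y z : A, under (x ⊓ y) z = under x z ⊔ under y z)
    (h2 : ∀ x y z : A, mul x (y ⊓ z) = mul x y ⊓ mul x z) (x y z : A) :
    mul x z ⊓ mul y z ≤ mul (x ⊓ y) z := by
  set w := mul (x ⊓ y) z
  set a := under x w
  set b := under y w
  have hxa : mul x a ≤ w := (hl x).l_u_le w
  have hyb : mul y b ≤ w := (hl y).l_u_le w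
  have hz : z ≤ a ⊔ b := h1 x y w ▸ (hl _).le_u_l z
  have hx : mul x z ≤ w ⊔ mul x (z ⊓ b) := mul_le_sup_mul_inf (hl x) hz hxa
  have hy : mul y z ≤ w ⊔ mul y (z ⊓ a) := mul_le_sup_mul_inf (hl y) (sup_comm a b ▸ hz) hyb
  have hcross : mul x (z ⊓ b) ⊓ mul y (z ⊓ a) ≤ w :=
    calc mul x (z ⊓ b) ⊓ mul y (z ⊓ a) ≤ mul x b ⊓ mul y a :=
          inf_le_inf ((hl x).monotone_l inf_le_right) ((hl y).monotone_l inf_le_right)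
      _ ≤ mul x (b ⊓ a) ⊔ mul y (b ⊓ a) := mul_inf_mul_le_sup_mul_inf hr h2 x y b a
      _ ≤ w := sup_le (((hl x).monotone_l inf_le_right).trans hxa)
          (((hl y).monotone_l inf_le_left).trans hyb)
  calc mul x z ⊓ mul y z ≤ (w ⊔ mul x (z ⊓ b)) ⊓ (w ⊔ mul y (z ⊓ a)) := inf_le_inf hx hy
    _ ≤ w ⊔ mul x (z ⊓ b) ⊓ mul y (z ⊓ a) := le_sup_inf
    _ ≤ w := sup_le le_rfl hcross

end ResiduatedBinar

/-- In a residuated binar with distributive lattice reduct,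
identities (5) and (1) imply identity (2). -/
theorem stmt_4 {A : Type*} [Lattice A]
    (mul under over' : A → A → A)
    (hres : ∀ x y z : A, (mul x y ≤ z ↔ y ≤ under x z) ∧ (mul x y ≤ z ↔ x ≤ over' z y))
    (hdist : ∀ x y z : A, x ⊓ (y ⊔ z) = (x ⊓ y) ⊔ (x ⊓ z))
    (h1 : ∀ x y z : A, under (x ⊓ y) z = under x z ⊔ under y z)
    (h2 : ∀ x y z : A, mul x (y ⊓ z) = mul x y ⊓ mul x z) :
    ∀ x y z : A, mul (x ⊓ y) z = mul x z ⊓ mul y z := by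
  let _ : DistribLattice A := DistribLattice.ofInfSupLe fun x y z => (hdist x y z).le
  have hl : ∀ x, GaloisConnection (mul x) (under x) := fun x a b => (hres x a b).1
  have hr : ∀ y, GaloisConnection (fun x => mul x y) (fun z => over' z y) :=
    fun y a b => (hres a y b).2
  intro x y z
  exact le_antisymm (le_inf ((hr z).monotone_l inf_le_left) ((hr z).monotone_l inf_le_right))
    (mul_inf_mul_le_inf_mul hl hr h1 h2 x y z)
end

section
/- Let A be a residuated binar whose underlying lattice is distributive. If A satisfies the identities x/(y ∧ z) = (x/y) ∨ (x/z) and (x ∧ y)·z = (x·z) ∧ (y·z), then A satisfies the identity x·(y ∧ z) = (x·y) ∧ (x·z). -/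
/-!
Put `w = x (y ∧ z)`. Then `x ≤ w/(y ∧ z) = w/y ∨ w/z`, so by distributivity `x = v ∨ u` with
`v y ≤ w` and `u z ≤ w`. Multiplication preserves joins in each argument, hence
`x y ∧ x z ≤ (w ∨ u y) ∧ (w ∨ v z) = w ∨ (u y ∧ v z)`, and the cross term is absorbed by `w`
because `(x ∧ y) z = x z ∧ y z` gives `u y ∧ v z ≤ (u ∧ v)(y ∨ z) = (u ∧ v) y ∨ (u ∧ v) z ≤ w`.
-/

section ResiduatedBinar

variable {A : Type*} {mul under ovr : A → A → A}

theorem gc_mul_const_ovr [Preorder A] (hl : ∀ x y z : A, mul x y ≤ z ↔ x ≤ ovr z y) (c : A) :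
    GaloisConnection (mul · c) (ovr · c) :=
  fun a b => hl a c b

theorem gc_const_mul_under [Preorder A] (hr : ∀ x y z : A, mul x y ≤ z ↔ y ≤ under x z)
    (c : A) : GaloisConnection (mul c ·) (under c ·) :=
  fun a b => hr c a b

variable [DistribLattice A]

theorem inf_mul_inf_mul_le_of_mul_le (hl : ∀ x y z : A, mul x y ≤ z ↔ x ≤ ovr z y)
    (hr : ∀ x y z : A, mul x y ≤ z ↔ y ≤ under x z)
    (h2 : ∀ x y z : A, mul (x ⊓ y) z = mul x z ⊓ mul y z)
    {u v w y z : A} (hv : mul v y ≤ w) (hu : mul u z ≤ w) :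
    mul u y ⊓ mul v z ≤ w :=
  calc mul u y ⊓ mul v z ≤ mul u (y ⊔ z) ⊓ mul v (y ⊔ z) :=
        inf_le_inf ((gc_const_mul_under hr u).monotone_l le_sup_left)
          ((gc_const_mul_under hr v).monotone_l le_sup_right)
    _ = mul (u ⊓ v) y ⊔ mul (u ⊓ v) z := by rw [← h2, (gc_const_mul_under hr _).l_sup]
    _ ≤ w := sup_le ((gc_mul_const_ovr hl y).monotone_l inf_le_right |>.trans hv)
        ((gc_mul_const_ovr hl z).monotone_l inf_le_left |>.trans hu)

theorem mul_inf_mul_le_of_eq_sup (hl : ∀ x y z : A, mul x y ≤ z ↔ x ≤ ovr z y)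
    (hr : ∀ x y z : A, mul x y ≤ z ↔ y ≤ under x z)
    (h2 : ∀ x y z : A, mul (x ⊓ y) z = mul x z ⊓ mul y z)
    {u v w x y z : A} (hx : x = v ⊔ u) (hv : mul v y ≤ w) (hu : mul u z ≤ w) :
    mul x y ⊓ mul x z ≤ w :=
  calc mul x y ⊓ mul x z = (mul v y ⊔ mul u y) ⊓ (mul v z ⊔ mul u z) := by
        rw [hx, (gc_mul_const_ovr hl y).l_sup, (gc_mul_const_ovr hl z).l_sup]
    _ ≤ (w ⊔ mul u y) ⊓ (mul v z ⊔ w) :=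
        inf_le_inf (sup_le_sup_right hv _) (sup_le_sup_left hu _)
    _ = w ⊔ mul u y ⊓ mul v z := by rw [sup_comm (mul v z), ← sup_inf_left]
    _ ≤ w := sup_le le_rfl (inf_mul_inf_mul_le_of_mul_le hl hr h2 hv hu)

theorem mul_inf_of_ovr_inf_of_inf_mul (hl : ∀ x y z : A, mul x y ≤ z ↔ x ≤ ovr z y)
    (hr : ∀ x y z : A, mul x y ≤ z ↔ y ≤ under x z)
    (h1 : ∀ x y z : A, ovr x (y ⊓ z) = ovr x y ⊔ ovr x z)
    (h2 : ∀ x y z : A, mul (x ⊓ y) z = mul x z ⊓ mul y z) (x y z : A) :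
    mul x (y ⊓ z) = mul x y ⊓ mul x z := by
  have hmono := (gc_const_mul_under hr x).monotone_l
  refine le_antisymm (le_inf (hmono inf_le_left) (hmono inf_le_right)) ?_
  set w := mul x (y ⊓ z)
  have hx : x ≤ ovr w y ⊔ ovr w z := h1 w y z ▸ (hl x (y ⊓ z) w).mp le_rfl
  have hsplit : x = x ⊓ ovr w y ⊔ x ⊓ ovr w z := by rw [← inf_sup_left, inf_eq_left.mpr hx]
  exact mul_inf_mul_le_of_eq_sup hl hr h2 hsplit
    ((hl _ y w).mpr inf_le_right) ((hl _ z w).mpr inf_le_right)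

end ResiduatedBinar

/-- In a residuated binar with distributive lattice reduct,
identities (6) and (2) imply identity (1). -/
theorem stmt_5 {A : Type*} [Lattice A]
    (mul under ovr : A → A → A)
    (hres : ∀ x y z : A, (mul x y ≤ z ↔ y ≤ under x z) ∧ (mul x y ≤ z ↔ x ≤ ovr z y))
    (hdist : ∀ x y z : A, x ⊓ (y ⊔ z) = (x ⊓ y) ⊔ (x ⊓ z))
    (h1 : ∀ x y z : A, ovr x (y ⊓ z) = ovr x y ⊔ ovr x z)
    (h2 : ∀ x y z : A, mul (x ⊓ y) z = mul x z ⊓ mul y z) :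
    ∀ x y z : A, mul x (y ⊓ z) = mul x y ⊓ mul x z := by
  let _ : DistribLattice A := DistribLattice.ofInfSupLe fun x y z => (hdist x y z).le
  exact mul_inf_of_ovr_inf_of_inf_mul (fun x y z => (hres x y z).2) (fun x y z => (hres x y z).1)
    h1 h2
end

section
/- There exists a finite residuated binar A that satisfies the five distributivity identities x·(y ∧ z) = (x·y) ∧ (x·z), (x ∧ y)·z = (x·z) ∧ (y·z), (x ∨ y)/z = (x/z) ∨ (y/z), (x ∧ y)\z = (x\z) ∨ (y\z) and x/(y ∧ z) = (x/y) ∨ (x/z), but does not satisfy the identity x\(y ∨ z) = (x\y) ∨ (x\z). Consequently, the identity x\(y ∨ z) = (x\y) ∨ (x\z) does not follow from any combination of the other five identities in residuated binars. -/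
/-!
The lattice `L7` is `0 < 1, 2 < 3 < 4 < 6` together with `1 < 5 < 6`; it is not distributive
(`{1, 3, 4, 5, 6}` is a pentagon). Multiplication is `x · y = σ x ⊓ τ y`, where the meet
endomorphisms `σ` and `τ` collapse `1 ↦ 0`, `3, 4 ↦ 2` and `4 ↦ 3` respectively, so it distributes
over meets on both sides. It also preserves `⊥` and binary joins in each argument, so on this
finite lattice both residuals exist, `x \ z` being the largest `y` with `x · y ≤ z`; the remaining
three identities are finite checks. `x \ (y ⊔ z) = x \ y ⊔ x \ z` fails because `τ` identifies `4`
with `3`: `6 \ (1 ⊔ 2) = 6 \ 3 = 4`, whereas `6 \ 1 ⊔ 6 \ 2 = 1 ⊔ 2 = 3`.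
-/

def upperAdjoint {α β : Type*} [SemilatticeSup α] [OrderBot α] [Fintype α] [LE β] [DecidableLE β]
    (f : α → β) (z : β) : α :=
  (Finset.univ.filter (f · ≤ z)).sup id

theorem gc_upperAdjoint {α β : Type*} [SemilatticeSup α] [OrderBot α] [Fintype α]
    [SemilatticeSup β] [OrderBot β] [DecidableLE β] (f : SupBotHom α β) :
    GaloisConnection f (upperAdjoint f) := by
  intro y z
  constructor
  · intro h
    exact Finset.le_sup (f := id) (Finset.mem_filter.2 ⟨Finset.mem_univ y, h⟩)
  · intro h
    calc f y ≤ f (upperAdjoint f z) := OrderHomClass.mono f h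
      _ = (Finset.univ.filter (f · ≤ z)).sup (f ∘ id) := map_finset_sup f _ _
      _ ≤ z := Finset.sup_le fun w hw => (Finset.mem_filter.1 hw).2

def L7 : Type := Fin 7

namespace L7

instance : Fintype L7 := inferInstanceAs (Fintype (Fin 7))
instance : DecidableEq L7 := inferInstanceAs (DecidableEq (Fin 7))
instance (n : ℕ) : OfNat L7 n := inferInstanceAs (OfNat (Fin 7) n)

instance : Lattice L7 :=
  @Lattice.mk' L7
    ⟨(![![0, 1, 2, 3, 4, 5, 6],
        ![1, 1, 3, 3, 4, 5, 6],
        ![2, 3, 2, 3, 4, 6, 6],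
        ![3, 3, 3, 3, 4, 6, 6],
        ![4, 4, 4, 4, 4, 6, 6],
        ![5, 5, 6, 6, 6, 5, 6],
        ![6, 6, 6, 6, 6, 6, 6]] : L7 → L7 → L7)⟩
    ⟨(![![0, 0, 0, 0, 0, 0, 0],
        ![0, 1, 0, 1, 1, 1, 1],
        ![0, 0, 2, 2, 2, 0, 2],
        ![0, 1, 2, 3, 3, 1, 3],
        ![0, 1, 2, 3, 4, 1, 4],
        ![0, 1, 0, 1, 1, 5, 5],
        ![0, 1, 2, 3, 4, 5, 6]] : L7 → L7 → L7)⟩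
    (by decide) (by decide) (by decide) (by decide) (by decide) (by decide)

instance : DecidableLE L7 := fun a b => inferInstanceAs (Decidable (a ⊔ b = b))

instance : OrderBot L7 where
  bot := 0
  bot_le := by decide

def σ : InfHom L7 L7 where
  toFun := (![0, 0, 2, 2, 2, 5, 6] : L7 → L7)
  map_inf' := by decide

def τ : InfHom L7 L7 where
  toFun := (![0, 1, 2, 3, 3, 5, 6] : L7 → L7)
  map_inf' := by decide

def mul (x y : L7) : L7 := σ x ⊓ τ y

theorem mul_inf (x y z : L7) : mul x (y ⊓ z) = mul x y ⊓ mul x z := by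
  unfold mul; rw [map_inf, inf_inf_distrib_left]

theorem inf_mul (x y z : L7) : mul (x ⊓ y) z = mul x z ⊓ mul y z := by
  unfold mul; rw [map_inf, inf_inf_distrib_right]

def mulLeft (x : L7) : SupBotHom L7 L7 where
  toFun := mul x
  map_sup' := by revert x; decide
  map_bot' := by revert x; decide

def mulRight (y : L7) : SupBotHom L7 L7 where
  toFun := (mul · y)
  map_sup' := by revert y; decide
  map_bot' := by revert y; decide

def ldiv (x z : L7) : L7 := upperAdjoint (mul x) z

def rdiv (z y : L7) : L7 := upperAdjoint (mul · y) z

theorem mul_le_iff_le_ldiv {x y z : L7} : mul x y ≤ z ↔ y ≤ ldiv x z :=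
  gc_upperAdjoint (mulLeft x) y z

theorem mul_le_iff_le_rdiv {x y z : L7} : mul x y ≤ z ↔ x ≤ rdiv z y :=
  gc_upperAdjoint (mulRight y) x z

theorem rdiv_sup (x y z : L7) : rdiv (x ⊔ y) z = rdiv x z ⊔ rdiv y z := by
  revert x y z; decide +kernel

theorem ldiv_inf (x y z : L7) : ldiv (x ⊓ y) z = ldiv x z ⊔ ldiv y z := by
  revert x y z; decide +kernel

theorem rdiv_inf (x y z : L7) : rdiv x (y ⊓ z) = rdiv x y ⊔ rdiv x z := by
  revert x y z; decide +kernel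

theorem ldiv_six_one_sup_two : ldiv 6 (1 ⊔ 2) ≠ ldiv 6 1 ⊔ ldiv 6 2 := by
  decide +kernel

end L7

/-- There is a finite residuated binar satisfying identities
(1), (2), (4), (5), (6) but not identity (3). -/
theorem stmt_8 :
    ∃ (A : Type) (_ : Fintype A) (_ : Lattice A) (mul under ovr : A → A → A),
      (∀ x y z : A, (mul x y ≤ z ↔ y ≤ under x z) ∧ (mul x y ≤ z ↔ x ≤ ovr z y)) ∧
      (∀ x y z : A, mul x (y ⊓ z) = mul x y ⊓ mul x z) ∧
      (∀ x y z : A, mul (x ⊓ y) z = mul x z ⊓ mul y z) ∧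
      (∀ x y z : A, ovr (x ⊔ y) z = ovr x z ⊔ ovr y z) ∧
      (∀ x y z : A, under (x ⊓ y) z = under x z ⊔ under y z) ∧
      (∀ x y z : A, ovr x (y ⊓ z) = ovr x y ⊔ ovr x z) ∧
      ¬ (∀ x y z : A, under x (y ⊔ z) = under x y ⊔ under x z) :=
  ⟨L7, inferInstance, inferInstance, L7.mul, L7.ldiv, L7.rdiv,
    fun _ _ _ => ⟨L7.mul_le_iff_le_ldiv, L7.mul_le_iff_le_rdiv⟩,
    L7.mul_inf, L7.inf_mul, L7.rdiv_sup, L7.ldiv_inf, L7.rdiv_inf,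
    fun h => L7.ldiv_six_one_sup_two (h 6 1 2)⟩
end

section
/- There exists a finite residuated binar A that satisfies the five distributivity identities x·(y ∧ z) = (x·y) ∧ (x·z), (x ∧ y)·z = (x·z) ∧ (y·z), x\(y ∨ z) = (x\y) ∨ (x\z), (x ∨ y)/z = (x/z) ∨ (y/z) and (x ∧ y)\z = (x\z) ∨ (y\z), but does not satisfy the identity x/(y ∧ z) = (x/y) ∨ (x/z). Consequently, the identity x/(y ∧ z) = (x/y) ∨ (x/z) does not follow from any combination of the other five identities in residuated binars. -/
/-!
A nine-element counter-model. Its lattice is the non-distributive lattice with Hasse diagram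
`0 ⋖ 1, 2`, `1 ⋖ 3, 4`, `2 ⋖ 4`, `3 ⋖ 5, 7`, `4 ⋖ 6 ⋖ 7`, `5, 7 ⋖ 8`; the residuals are forced by
the multiplication (`x \ z` is the largest `y` with `x·y ≤ z`, `z / y` the largest `x` with
`x·y ≤ z`), and every identity is a finite check. The identity `x / (y ∧ z) = x / y ∨ x / z`
fails at `x = 0`, `y = 4`, `z = 5`: there `0 / (4 ∧ 5) = 0 / 1 = 6`, while `0 / 4 ∨ 0 / 5 = 1 ∨ 2 = 4`.
-/

namespace NineElementBinar

def M : Type := Fin 9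

instance : Fintype M := inferInstanceAs (Fintype (Fin 9))

instance : DecidableEq M := inferInstanceAs (DecidableEq (Fin 9))

instance (n : ℕ) : OfNat M n := inferInstanceAs (OfNat (Fin 9) n)

instance : Max M where
  max a b := (![![0, 1, 2, 3, 4, 5, 6, 7, 8], ![1, 1, 4, 3, 4, 5, 6, 7, 8],
    ![2, 4, 2, 7, 4, 8, 6, 7, 8], ![3, 3, 7, 3, 7, 5, 7, 7, 8], ![4, 4, 4, 7, 4, 8, 6, 7, 8],
    ![5, 5, 8, 5, 8, 5, 8, 8, 8], ![6, 6, 6, 7, 6, 8, 6, 7, 8], ![7, 7, 7, 7, 7, 8, 7, 7, 8],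
    ![8, 8, 8, 8, 8, 8, 8, 8, 8]] : Fin 9 → Fin 9 → Fin 9) a b

instance : Min M where
  min a b := (![![0, 0, 0, 0, 0, 0, 0, 0, 0], ![0, 1, 0, 1, 1, 1, 1, 1, 1],
    ![0, 0, 2, 0, 2, 0, 2, 2, 2], ![0, 1, 0, 3, 1, 3, 1, 3, 3], ![0, 1, 2, 1, 4, 1, 4, 4, 4],
    ![0, 1, 0, 3, 1, 5, 1, 3, 5], ![0, 1, 2, 1, 4, 1, 6, 6, 6], ![0, 1, 2, 3, 4, 3, 6, 7, 7],
    ![0, 1, 2, 3, 4, 5, 6, 7, 8]] : Fin 9 → Fin 9 → Fin 9) a b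

instance : Lattice M :=
  Lattice.mk' (by decide) (by decide) (by decide) (by decide) (by decide) (by decide)

instance : DecidableLE M := fun a b => decidable_of_iff (a ⊔ b = b) sup_eq_right

def mul : M → M → M := (![![0, 0, 0, 0, 0, 0, 0, 0, 0], ![0, 0, 0, 0, 0, 5, 0, 0, 5],
  ![0, 0, 2, 0, 2, 0, 2, 2, 2], ![0, 5, 0, 5, 5, 5, 5, 5, 5], ![0, 0, 2, 0, 2, 5, 2, 2, 8],
  ![0, 5, 0, 5, 5, 5, 5, 5, 5], ![0, 0, 2, 0, 2, 5, 2, 2, 8], ![0, 5, 2, 5, 8, 5, 8, 8, 8],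
  ![0, 5, 2, 5, 8, 5, 8, 8, 8]] : Fin 9 → Fin 9 → Fin 9)

def under : M → M → M := (![![8, 8, 8, 8, 8, 8, 8, 8, 8], ![7, 7, 7, 7, 7, 8, 7, 7, 8],
  ![5, 5, 8, 5, 8, 5, 8, 8, 8], ![2, 2, 2, 2, 2, 8, 2, 2, 8], ![3, 3, 7, 3, 7, 5, 7, 7, 8],
  ![2, 2, 2, 2, 2, 8, 2, 2, 8], ![3, 3, 7, 3, 7, 5, 7, 7, 8], ![0, 0, 2, 0, 2, 5, 2, 2, 8],
  ![0, 0, 2, 0, 2, 5, 2, 2, 8]] : Fin 9 → Fin 9 → Fin 9)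

def ovr : M → M → M := (![![8, 6, 5, 6, 1, 2, 1, 1, 0], ![8, 6, 5, 6, 1, 2, 1, 1, 0],
  ![8, 6, 8, 6, 6, 2, 6, 6, 2], ![8, 6, 5, 6, 1, 2, 1, 1, 0], ![8, 6, 8, 6, 6, 2, 6, 6, 2],
  ![8, 8, 5, 8, 5, 8, 5, 5, 5], ![8, 6, 8, 6, 6, 2, 6, 6, 2], ![8, 6, 8, 6, 6, 2, 6, 6, 2],
  ![8, 8, 8, 8, 8, 8, 8, 8, 8]] : Fin 9 → Fin 9 → Fin 9)

theorem mul_le_iff_le_under : ∀ x y z : M, mul x y ≤ z ↔ y ≤ under x z := by decide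

theorem mul_le_iff_le_ovr : ∀ x y z : M, mul x y ≤ z ↔ x ≤ ovr z y := by decide

theorem mul_inf : ∀ x y z : M, mul x (y ⊓ z) = mul x y ⊓ mul x z := by decide

theorem inf_mul : ∀ x y z : M, mul (x ⊓ y) z = mul x z ⊓ mul y z := by decide

theorem under_sup : ∀ x y z : M, under x (y ⊔ z) = under x y ⊔ under x z := by decide

theorem sup_ovr : ∀ x y z : M, ovr (x ⊔ y) z = ovr x z ⊔ ovr y z := by decide

theorem inf_under : ∀ x y z : M, under (x ⊓ y) z = under x z ⊔ under y z := by decide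

theorem exists_ovr_inf_ne : ∃ x y z : M, ovr x (y ⊓ z) ≠ ovr x y ⊔ ovr x z :=
  ⟨0, 4, 5, by decide⟩

end NineElementBinar

open NineElementBinar in
/-- There is a finite residuated binar satisfying identities
(1), (2), (3), (4), (5) but not identity (6). -/
theorem stmt_11 :
    ∃ (A : Type) (_ : Fintype A) (_ : Lattice A) (mul under ovr : A → A → A),
      (∀ x y z : A, (mul x y ≤ z ↔ y ≤ under x z) ∧ (mul x y ≤ z ↔ x ≤ ovr z y)) ∧
      (∀ x y z : A, mul x (y ⊓ z) = mul x y ⊓ mul x z) ∧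
      (∀ x y z : A, mul (x ⊓ y) z = mul x z ⊓ mul y z) ∧
      (∀ x y z : A, under x (y ⊔ z) = under x y ⊔ under x z) ∧
      (∀ x y z : A, ovr (x ⊔ y) z = ovr x z ⊔ ovr y z) ∧
      (∀ x y z : A, under (x ⊓ y) z = under x z ⊔ under y z) ∧
      ¬ (∀ x y z : A, ovr x (y ⊓ z) = ovr x y ⊔ ovr x z) := by
  refine ⟨M, inferInstance, inferInstance, mul, under, ovr,
    fun x y z => ⟨mul_le_iff_le_under x y z, mul_le_iff_le_ovr x y z⟩,
    mul_inf, inf_mul, under_sup, sup_ovr, inf_under, ?_⟩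
  obtain ⟨x, y, z, hne⟩ := exists_ovr_inf_ne
  exact fun h => hne (h x y z)
end
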